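/- arXiv:2103.08085 — 4 statements merged into one kernel-verified Lean document; each statement's English description precedes it below -/
import Mathlib

section
/- Let $k \ge 3$ and let $X$ be a set of roots of the root system of type $A_{k-1}^t$ (the orthogonal sum of $t$ copies of $A_{k-1}$) such that $(\alpha|\beta) \in \{0,-1\}$ for all distinct $\alpha,\beta \in X$. Then $|X| \le tk$. -/
/-!
Every root of type `A_{n-1}` in `ℤⁿ` is `eᵢ - eⱼ` with `i ≠ j`: its entries lie in `{-1, 0, 1}`,
and norm `2` with coordinate sum `0` leaves exactly one `1` and one `-1`. Two distinct roots
`eᵢ - eⱼ`, `eᵢ - eⱼ'` with the same positive coordinate have inner product `1`, so in a set with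
pairwise inner products `≤ 0` the position of the `1` determines the root, giving at most `n`
roots. The orthogonal sum of `t` copies of `A_{k-1}` lies in `A_{tk-1}` after uncurrying.
-/

open Finset Matrix

section

variable {ι : Type*}

lemma single_sub_single_apply_eq_one_iff [DecidableEq ι] {i j : ι} (hij : i ≠ j) (r : ι) :
    (Pi.single i 1 - Pi.single j 1 : ι → ℤ) r = 1 ↔ r = i := by
  by_cases hri : r = i
  · subst hri; simp [hij]
  by_cases hrj : r = j
  · subst hrj; simp [hij.symm]
  · simp [hri, hrj]

variable [Fintype ι]

lemma entry_mem_Icc_of_dotProduct_self_eq_two {v : ι → ℤ} (hv : v ⬝ᵥ v = 2) (i : ι) :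
    -1 ≤ v i ∧ v i ≤ 1 := by
  have : v i * v i ≤ 2 :=
    hv ▸ single_le_sum (f := fun j => v j * v j) (fun j _ => mul_self_nonneg _) (mem_univ i)
  constructor <;> nlinarith

lemma exists_eq_single_sub_single [DecidableEq ι] {v : ι → ℤ} (hsum : ∑ i, v i = 0)
    (hv : v ⬝ᵥ v = 2) : ∃ i j, i ≠ j ∧ v = Pi.single i 1 - Pi.single j 1 := by
  have hval := entry_mem_Icc_of_dotProduct_self_eq_two hv
  have hcount : ∀ s : ℤ, s = 1 ∨ s = -1 → #{i | v i = s} = 1 := by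
    rintro s hs
    -- Summing `x² + s x` over the entries counts those equal to `s`, twice.
    have hind : ∀ i, v i * v i + s * v i = 2 * if v i = s then 1 else 0 := by
      intro i
      obtain ⟨h1, h2⟩ := hval i
      rcases hs with rfl | rfl <;> interval_cases v i <;> simp
    have : (2 : ℤ) * #{i | v i = s} = 2 := by
      calc (2 : ℤ) * #{i | v i = s} = ∑ i, (v i * v i + s * v i) := by
            simp only [hind, ← mul_sum, sum_boole]
        _ = v ⬝ᵥ v + s * ∑ i, v i := by rw [sum_add_distrib, mul_sum]; rfl
        _ = 2 := by rw [hv, hsum, mul_zero, add_zero]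
    omega
  obtain ⟨i, hi⟩ := card_eq_one.mp (hcount 1 (.inl rfl))
  obtain ⟨j, hj⟩ := card_eq_one.mp (hcount (-1) (.inr rfl))
  have hi' : ∀ r, v r = 1 ↔ r = i := fun r => by simpa using congrArg (r ∈ ·) hi
  have hj' : ∀ r, v r = -1 ↔ r = j := fun r => by simpa using congrArg (r ∈ ·) hj
  have hvi : v i = 1 := (hi' i).2 rfl
  have hvj : v j = -1 := (hj' j).2 rfl
  have hij : i ≠ j := by rintro rfl; omega
  refine ⟨i, j, hij, funext fun r => ?_⟩
  by_cases hri : r = i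
  · subst hri; simp [hij, hvi]
  by_cases hrj : r = j
  · subst hrj; simp [Ne.symm hij, hvj]
  have h1 := (hi' r).not.2 hri
  have h2 := (hj' r).not.2 hrj
  have := hval r
  simp only [Pi.sub_apply, Pi.single_apply, hri, hrj, if_false, sub_zero]
  omega

lemma single_sub_single_dotProduct_pos [DecidableEq ι] {i j j' : ι} (hj : i ≠ j) (hj' : i ≠ j') :
    0 < (Pi.single i 1 - Pi.single j 1 : ι → ℤ) ⬝ᵥ (Pi.single i 1 - Pi.single j' 1) := by
  simp only [dotProduct_sub, dotProduct_single, Pi.sub_apply, Pi.single_eq_same, ne_eq, hj.symm,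
    not_false_eq_true, Pi.single_eq_of_ne', sub_zero, mul_one, hj', Pi.single_apply, zero_sub,
    sub_neg_eq_add]
  split_ifs <;> norm_num

theorem card_le_of_pairwise_dotProduct_nonpos (X : Finset (ι → ℤ))
    (hroot : ∀ v ∈ X, ∑ i, v i = 0 ∧ v ⬝ᵥ v = 2)
    (hX : (X : Set (ι → ℤ)).Pairwise fun v w => v ⬝ᵥ w ≤ 0) :
    #X ≤ Fintype.card ι := by
  classical
  rw [← card_univ]
  refine card_le_card_of_forall_subsingleton (fun v r => v r = 1) (fun v hv => ?_) fun r _ => ?_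
  · obtain ⟨i, j, hij, rfl⟩ := exists_eq_single_sub_single (hroot v hv).1 (hroot v hv).2
    exact ⟨i, mem_univ i, (single_sub_single_apply_eq_one_iff hij i).2 rfl⟩
  · rintro v ⟨hv, hvr⟩ w ⟨hw, hwr⟩
    by_contra hne
    obtain ⟨i, j, hij, rfl⟩ := exists_eq_single_sub_single (hroot v hv).1 (hroot v hv).2
    obtain ⟨i', j', hij', rfl⟩ := exists_eq_single_sub_single (hroot w hw).1 (hroot w hw).2
    rw [single_sub_single_apply_eq_one_iff hij] at hvr
    rw [single_sub_single_apply_eq_one_iff hij'] at hwr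
    subst hvr hwr
    exact (hX hv hw hne).not_gt (single_sub_single_dotProduct_pos hij hij')

end

theorem stmt_8_general {k t : ℕ} (X : Finset (Fin t → Fin k → ℤ))
    (hroot : ∀ a ∈ X, (∀ b, ∑ i, a b i = 0) ∧ ∑ b, ∑ i, a b i * a b i = 2)
    (hpair : ∀ a ∈ X, ∀ c ∈ X, a ≠ c →
      (∑ b, ∑ i, a b i * c b i = 0 ∨ ∑ b, ∑ i, a b i * c b i = -1)) :
    X.card ≤ t * k := by
  have hdot (a c : Fin t → Fin k → ℤ) :
      Function.uncurry a ⬝ᵥ Function.uncurry c = ∑ b, ∑ i, a b i * c b i :=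
    Fintype.sum_prod_type _
  have h := card_le_of_pairwise_dotProduct_nonpos (X.image Function.uncurry) ?_ ?_
  · simpa [card_image_of_injective X (Function.uncurry_injective (γ := ℤ))] using h
  · simp only [mem_image, forall_exists_index, and_imp]
    rintro _ a ha rfl
    refine ⟨?_, by rw [hdot]; exact (hroot a ha).2⟩
    simp [Fintype.sum_prod_type, (hroot a ha).1]
  · simp only [coe_image, Set.Pairwise, Set.mem_image, mem_coe]
    rintro _ ⟨a, ha, rfl⟩ _ ⟨c, hc, rfl⟩ hne
    rw [hdot]
    rcases hpair a ha c hc (by rintro rfl; exact hne rfl) with h | h <;> omega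

/-- Let `k ≥ 3` and let `X` be a set of roots of the root system of
type `A_{k-1}^t` (the norm-2 vectors of the orthogonal sum of `t` copies of the
root lattice of type `A_{k-1}`) such that `(α|β) ∈ {0, -1}` for all distinct
`α, β ∈ X`.  Then `|X| ≤ t k`. -/
theorem stmt_8 {k t : ℕ} (hk : 3 ≤ k) (X : Finset (Fin t → Fin k → ℤ))
    (hroot : ∀ a ∈ X, (∀ b, ∑ i, a b i = 0) ∧ ∑ b, ∑ i, a b i * a b i = 2)
    (hpair : ∀ a ∈ X, ∀ c ∈ X, a ≠ c →
      (∑ b, ∑ i, a b i * c b i = 0 ∨ ∑ b, ∑ i, a b i * c b i = -1)) :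
    X.card ≤ t * k :=
  stmt_8_general X hroot hpair
end

section
/- Let $p$ be an odd prime, $\Delta_i$ a base of the root system of the $i$-th copy of $A_{p-1}$ in $R = A_{p-1}^{\perp t}$, and $\chi_\Delta = \frac{1}{p}(\rho_{\Delta_1},\dots,\rho_{\Delta_t})$ where $\rho_{\Delta_i}$ is the Weyl vector. Then for any $x \in \mathbb{Z}_p^t$, $(\lambda_x|\lambda_x) \in 2\mathbb{Z}$ if and only if $(\lambda_x|\chi_\Delta) \in \mathbb{Z}$. -/
/-!
Writing `λ_a = 𝟙_{[0,a)} - a/p` for the fundamental weight of `A_{p-1}` in coordinates and using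
that `ρ` and `λ_a` are orthogonal to `(1,…,1)`, both pairings reduce to partial sums over the first
`a` coordinates: `(λ_a | ρ)/p = a(p-a)/(2p)` and `(λ_a | λ_a) = a(p-a)/p`. Hence
`(λ_x | χ_Δ) = (λ_x | λ_x)/2` block by block, and the two integrality conditions coincide.
-/

/-- The coset representative `λ_x ∈ R*` associated with `x ∈ (ℤ/p)^t`: its `b`-th
block is the fundamental weight `λ_{x_b}` of `A_{p-1}`, whose first `x_b`
coordinates are `(p - x_b)/p` and remaining coordinates are `-x_b/p`. -/
def lam (p t : ℕ) (x : Fin t → ZMod p) : Fin t → Fin p → ℚ :=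
  fun b i => if (i : ℕ) < (x b).val then ((p : ℚ) - (x b).val) / p
    else -((x b).val : ℚ) / p

/-- The vector `χ_Δ = (ρ_{Δ_1}/p, …, ρ_{Δ_t}/p)`, where `ρ_Δ` is the Weyl vector of
`A_{p-1}`, with coordinates `(p - 1 - 2 i)/2` (0-indexed). -/
def chi (p t : ℕ) : Fin t → Fin p → ℚ :=
  fun _ i => ((p : ℚ) - 1 - 2 * ((i : ℕ) : ℚ)) / (2 * p)

open Finset

def fundWeight (p a i : ℕ) : ℚ :=
  if i < a then ((p : ℚ) - a) / p else -(a : ℚ) / p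

def weylCoord (p i : ℕ) : ℚ :=
  ((p : ℚ) - 1 - 2 * i) / (2 * p)

lemma lam_eq_fundWeight (p t : ℕ) (x : Fin t → ZMod p) (b : Fin t) (i : Fin p) :
    lam p t x b i = fundWeight p (x b).val i :=
  rfl

lemma chi_eq_weylCoord (p t : ℕ) (b : Fin t) (i : Fin p) : chi p t b i = weylCoord p i :=
  rfl

lemma sum_range_weylCoord (p a : ℕ) :
    ∑ i ∈ range a, weylCoord p i = a * ((p : ℚ) - a) / (2 * p) := by
  induction a with
  | zero => simp
  | succ a ih =>
    rw [sum_range_succ, ih, weylCoord, ← add_div]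
    push_cast
    ring_nf

lemma sum_range_weylCoord_self (p : ℕ) : ∑ i ∈ range p, weylCoord p i = 0 := by
  simp [sum_range_weylCoord]

section FundWeight

variable {p a : ℕ}

lemma fundWeight_eq_indicator_sub (hp : p ≠ 0) (i : ℕ) :
    fundWeight p a i = (if i < a then 1 else 0) - a / p := by
  have hp' : (p : ℚ) ≠ 0 := Nat.cast_ne_zero.mpr hp
  unfold fundWeight
  split_ifs
  · field_simp
  · ring

lemma sum_range_fundWeight_mul (hp : p ≠ 0) (ha : a ≤ p) (g : ℕ → ℚ) :
    ∑ i ∈ range p, fundWeight p a i * g i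
      = ∑ i ∈ range a, g i - a / p * ∑ i ∈ range p, g i := by
  have hfilter : {i ∈ range p | i < a} = range a := by
    ext i
    simp only [mem_filter, mem_range]
    omega
  simp_rw [fundWeight_eq_indicator_sub hp, sub_mul, ite_mul, one_mul, zero_mul, sum_sub_distrib,
    ← mul_sum, ← sum_filter, hfilter]

lemma sum_range_fundWeight_mul_weylCoord (hp : p ≠ 0) (ha : a ≤ p) :
    ∑ i ∈ range p, fundWeight p a i * weylCoord p i = a * ((p : ℚ) - a) / (2 * p) := by
  rw [sum_range_fundWeight_mul hp ha, sum_range_weylCoord, sum_range_weylCoord_self, mul_zero,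
    sub_zero]

lemma sum_range_fundWeight (hp : p ≠ 0) (ha : a ≤ p) : ∑ i ∈ range p, fundWeight p a i = 0 := by
  have hp' : (p : ℚ) ≠ 0 := Nat.cast_ne_zero.mpr hp
  simpa [hp'] using sum_range_fundWeight_mul hp ha (fun _ => 1)

lemma sum_range_fundWeight_mul_self (hp : p ≠ 0) (ha : a ≤ p) :
    ∑ i ∈ range p, fundWeight p a i * fundWeight p a i = a * ((p : ℚ) - a) / p := by
  have hhead : ∑ i ∈ range a, fundWeight p a i = a * ((p : ℚ) - a) / p := by
    have hconst : ∀ i ∈ range a, fundWeight p a i = ((p : ℚ) - a) / p :=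
      fun i hi => if_pos (mem_range.mp hi)
    rw [sum_congr rfl hconst, sum_const, card_range, nsmul_eq_mul, mul_div_assoc]
  rw [sum_range_fundWeight_mul hp ha, hhead, sum_range_fundWeight hp ha, mul_zero, sub_zero]

end FundWeight

lemma sum_lam_mul_chi_eq_half (p t : ℕ) [NeZero p] (x : Fin t → ZMod p) :
    ∑ b, ∑ i, lam p t x b i * chi p t b i = (∑ b, ∑ i, lam p t x b i * lam p t x b i) / 2 := by
  rw [sum_div]
  refine sum_congr rfl fun b _ => ?_
  have hp : p ≠ 0 := NeZero.ne p
  have ha : (x b).val ≤ p := (ZMod.val_lt (x b)).le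
  simp only [lam_eq_fundWeight, chi_eq_weylCoord]
  rw [Fin.sum_univ_eq_sum_range (fun i => fundWeight p (x b).val i * weylCoord p i),
    Fin.sum_univ_eq_sum_range (fun i => fundWeight p (x b).val i * fundWeight p (x b).val i),
    sum_range_fundWeight_mul_weylCoord hp ha, sum_range_fundWeight_mul_self hp ha]
  ring

theorem stmt_11_general (p t : ℕ) (hp : p.Prime) (x : Fin t → ZMod p) :
    (∃ m : ℤ, ∑ b, ∑ i, lam p t x b i * lam p t x b i = 2 * m) ↔
      ∃ m : ℤ, ∑ b, ∑ i, lam p t x b i * chi p t b i = m := by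
  have : NeZero p := ⟨hp.ne_zero⟩
  rw [sum_lam_mul_chi_eq_half]
  constructor <;> rintro ⟨m, hm⟩ <;> exact ⟨m, by linarith⟩

/-- For an odd prime `p` and any `x ∈ (ℤ/p)^t`,
`(λ_x | λ_x) ∈ 2ℤ` if and only if `(λ_x | χ_Δ) ∈ ℤ`. -/
theorem stmt_11 (p t : ℕ) (hp : p.Prime) (hodd : Odd p) (x : Fin t → ZMod p) :
    (∃ m : ℤ, ∑ b, ∑ i, lam p t x b i * lam p t x b i = 2 * m) ↔
      ∃ m : ℤ, ∑ b, ∑ i, lam p t x b i * chi p t b i = m :=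
  stmt_11_general p t hp x
end

section
/- An even lattice $L$ is isometric to $L_A(C)$ for some self-orthogonal code $C$ of length $t$ over an odd prime field $\mathbb{Z}_p$ if and only if $L$ contains a full sublattice isometric to the orthogonal sum of $t$ copies of the root lattice of type $A_{p-1}$. -/
/-!
Write `R` for `A_{p-1}^t`, realised as the block-sum-zero vectors of `ℤ^{t×p}`, and
`R^* = L_A(ℤ_p^t)` for its dual. Both sides of the equivalence say that `L` embeds
isometrically into `ℚ^{t×p}` with image between `R` and `R^*`.

Given `L ≅ L_A(C)`, the integral vectors form a full copy of `R`, since `p` kills `R^*/R`.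
Conversely, the isometry `S ≅ R` extends to `L` because `ℚ^{t×p}` is divisible; the extension
is isometric because `S` is full, and an even lattice is integral, so its image `M` pairs
integrally with `R` and therefore lies in `R^*`. Then `M = L_A(C)` for the code `C = M/R`.
A vector `α = m - c/p` of `L_A(C)` has norm `∑ m² - ∑_b c_b²/p`, so integrality of norms
forces `∑_b c_b² = 0` in `ℤ_p`.
-/

def LA (p t : ℕ) (C : Set (Fin t → ZMod p)) : Set (Fin t → Fin p → ℚ) :=
  {α | (∀ b, ∑ i, α b i = 0) ∧
    ∃ c ∈ C, ∀ b i, ∃ m : ℤ, α b i = (m : ℚ) - ((c b).val : ℚ) / p}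

section Blocks

variable {ι κ : Type*}

def blockDot [Fintype ι] [Fintype κ] {R : Type*} [CommSemiring R] (α β : ι → κ → R) : R :=
  ∑ s, α s ⬝ᵥ β s

lemma blockDot_smul_left [Fintype ι] [Fintype κ] {R : Type*} [CommRing R] (c : ℤ)
    (α β : ι → κ → R) : blockDot (c • α) β = c • blockDot α β := by
  simp only [blockDot, Pi.smul_apply, smul_dotProduct, Finset.smul_sum]

lemma blockDot_smul_right [Fintype ι] [Fintype κ] {R : Type*} [CommRing R] (c : ℤ)
    (α β : ι → κ → R) : blockDot α (c • β) = c • blockDot α β := by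
  simp only [blockDot, Pi.smul_apply, dotProduct_smul, Finset.smul_sum]

variable (ι κ) in
def blockSumZero [Fintype κ] (R : Type*) [AddCommGroup R] : AddSubgroup (ι → κ → R) where
  carrier := {a | ∀ s, ∑ i, a s i = 0}
  zero_mem' := by simp
  add_mem' := by
    intro a b ha hb s
    simp [Finset.sum_add_distrib, ha s, hb s]
  neg_mem' := by
    intro a ha s
    simp [ha s]

variable (ι κ) in
def castHom : (ι → κ → ℤ) →+ (ι → κ → ℚ) :=
  AddMonoidHom.compLeft (AddMonoidHom.compLeft (Int.castAddHom ℚ) κ) ι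

@[simp]
lemma castHom_apply (a : ι → κ → ℤ) (s : ι) (i : κ) : castHom ι κ a s i = a s i := rfl

lemma castHom_injective : Function.Injective (castHom ι κ) := fun a b h ↦ by
  ext s i
  simpa using congr_fun₂ h s i

lemma castHom_mem_blockSumZero [Fintype κ] {a : ι → κ → ℤ} :
    castHom ι κ a ∈ blockSumZero ι κ ℚ ↔ a ∈ blockSumZero ι κ ℤ :=
  forall_congr' fun s ↦ by simp only [castHom_apply]; exact_mod_cast Iff.rfl

lemma blockDot_castHom [Fintype ι] [Fintype κ] (a b : ι → κ → ℤ) :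
    blockDot (castHom ι κ a) (castHom ι κ b) = blockDot a b := by
  simp [blockDot, dotProduct]

lemma closure_blockSumZero [Fintype κ] (R : Type*) [AddCommGroup R] :
    AddSubgroup.closure {a : ι → κ → R | ∀ s, ∑ i, a s i = 0} = blockSumZero ι κ R :=
  AddSubgroup.closure_eq (blockSumZero ι κ R)

lemma mem_blockSumZero_of_zsmul_mem [Fintype κ] {α : ι → κ → ℚ} {c : ℤ}
    (hc : c ≠ 0) (h : c • α ∈ blockSumZero ι κ ℚ) : α ∈ blockSumZero ι κ ℚ := fun s ↦ by
  have := h s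
  simp only [Pi.smul_apply, zsmul_eq_mul, ← Finset.mul_sum] at this
  exact (mul_eq_zero.1 this).resolve_left (by exact_mod_cast hc)

end Blocks

lemma ZMod.exists_val_add_div {p : ℕ} [NeZero p] (c d : ZMod p) :
    ∃ k : ℤ, ((c + d).val : ℚ) / p = c.val / p + d.val / p - k := by
  have hdiv := Nat.mod_add_div (c.val + d.val) p
  rw [← ZMod.val_add] at hdiv
  generalize (c.val + d.val) / p = q at hdiv
  refine ⟨q, ?_⟩
  have hp : (p : ℚ) ≠ 0 := Nat.cast_ne_zero.mpr (NeZero.ne p)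
  have hdivQ : ((c + d).val : ℚ) + p * q = c.val + d.val := by exact_mod_cast hdiv
  field_simp
  push_cast
  linarith

section ConstructionA

variable {p t : ℕ} [NeZero p]

/- `(α, c) ∈ glue p t` says `α + c/p ∈ ℤ^{t×p}`, reading `c b` in `{0, …, p-1}`; on `R^*` this
is the graph of the quotient map `R^* → R^*/R ≅ ℤ_p^t`. -/
variable (p t) in
def glue : AddSubgroup ((Fin t → Fin p → ℚ) × (Fin t → ZMod p)) where
  carrier := {x | ∀ b i, ∃ m : ℤ, x.1 b i = m - ((x.2 b).val : ℚ) / p}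
  zero_mem' := fun b i ↦ ⟨0, by simp⟩
  add_mem' := by
    rintro ⟨α, c⟩ ⟨β, d⟩ hα hβ b i
    obtain ⟨m, hm⟩ := hα b i
    obtain ⟨m', hm'⟩ := hβ b i
    obtain ⟨k, hk⟩ := ZMod.exists_val_add_div (c b) (d b)
    refine ⟨m + m' - k, ?_⟩
    simp only [Prod.mk_add_mk, Pi.add_apply] at hm hm' hk ⊢
    rw [hm, hm', hk]
    push_cast
    ring
  neg_mem' := by
    rintro ⟨α, c⟩ hα b i
    obtain ⟨m, hm⟩ := hα b i
    obtain ⟨k, hk⟩ := ZMod.exists_val_add_div (c b) (-c b)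
    refine ⟨k - m, ?_⟩
    simp only [add_neg_cancel, ZMod.val_zero, Nat.cast_zero, zero_div] at hk
    simp only [Prod.neg_mk, Pi.neg_apply] at hm ⊢
    rw [hm]
    push_cast
    linarith

lemma mk_zero_mem_glue {α : Fin t → Fin p → ℚ} :
    (α, 0) ∈ glue p t ↔ α ∈ (castHom (Fin t) (Fin p)).range := by
  constructor
  · intro h
    choose m hm using h
    exact ⟨m, funext₂ fun b i ↦ by simpa using (hm b i).symm⟩
  · rintro ⟨a, rfl⟩ b i
    exact ⟨a b i, by simp⟩

lemma zsmul_mem_range_castHom_of_mem_glue {α : Fin t → Fin p → ℚ} {c : Fin t → ZMod p}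
    (h : (α, c) ∈ glue p t) : (p : ℤ) • α ∈ (castHom (Fin t) (Fin p)).range := by
  choose m hm using h
  dsimp only at hm
  refine ⟨fun b i ↦ p * m b i - (c b).val, funext₂ fun b i ↦ ?_⟩
  have hp : (p : ℚ) ≠ 0 := Nat.cast_ne_zero.mpr (NeZero.ne p)
  simp only [castHom_apply, Pi.smul_apply, hm, zsmul_eq_mul]
  push_cast
  field_simp

def constructionA (C : AddSubgroup (Fin t → ZMod p)) : AddSubgroup (Fin t → Fin p → ℚ) :=
  blockSumZero (Fin t) (Fin p) ℚ ⊓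
    (glue p t ⊓ (⊤ : AddSubgroup _).prod C).map (AddMonoidHom.fst _ _)

lemma mem_constructionA {C : AddSubgroup (Fin t → ZMod p)} {α : Fin t → Fin p → ℚ} :
    α ∈ constructionA C ↔ α ∈ blockSumZero (Fin t) (Fin p) ℚ ∧ ∃ c ∈ C, (α, c) ∈ glue p t := by
  simp [constructionA, AddSubgroup.mem_prod, and_comm]

lemma closure_LA (C : AddSubgroup (Fin t → ZMod p)) :
    AddSubgroup.closure (LA p t C) = constructionA C := by
  convert AddSubgroup.closure_eq (constructionA C)
  ext α
  exact mem_constructionA.symm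

def codeOf (M : AddSubgroup (Fin t → Fin p → ℚ)) : AddSubgroup (Fin t → ZMod p) :=
  (glue p t ⊓ M.prod ⊤).map (AddMonoidHom.snd _ _)

lemma mem_codeOf {M : AddSubgroup (Fin t → Fin p → ℚ)} {c : Fin t → ZMod p} :
    c ∈ codeOf M ↔ ∃ α ∈ M, (α, c) ∈ glue p t := by
  simp [codeOf, AddSubgroup.mem_prod, and_comm]

lemma constructionA_mono {C D : AddSubgroup (Fin t → ZMod p)} (h : C ≤ D) :
    constructionA C ≤ constructionA D := fun _ hα ↦
  let ⟨hsum, c, hc, hαc⟩ := mem_constructionA.1 hα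
  mem_constructionA.2 ⟨hsum, c, h hc, hαc⟩

lemma map_castHom_le_constructionA (C : AddSubgroup (Fin t → ZMod p)) :
    (blockSumZero (Fin t) (Fin p) ℤ).map (castHom _ _) ≤ constructionA C := by
  rintro _ ⟨r, hr, rfl⟩
  exact mem_constructionA.2
    ⟨castHom_mem_blockSumZero.2 hr, 0, zero_mem C, mk_zero_mem_glue.2 ⟨r, rfl⟩⟩

lemma zsmul_mem_map_castHom {C : AddSubgroup (Fin t → ZMod p)} {α : Fin t → Fin p → ℚ}
    (hα : α ∈ constructionA C) :
    (p : ℤ) • α ∈ (blockSumZero (Fin t) (Fin p) ℤ).map (castHom _ _) := by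
  obtain ⟨hsum, c, -, hαc⟩ := mem_constructionA.1 hα
  obtain ⟨a, ha⟩ := zsmul_mem_range_castHom_of_mem_glue hαc
  refine ⟨a, castHom_mem_blockSumZero.1 ?_, ha⟩
  rw [ha]
  exact AddSubgroup.zsmul_mem _ hsum _

lemma constructionA_codeOf {M : AddSubgroup (Fin t → Fin p → ℚ)}
    (hR : (blockSumZero (Fin t) (Fin p) ℤ).map (castHom _ _) ≤ M)
    (hM : M ≤ constructionA ⊤) : constructionA (codeOf M) = M := by
  apply le_antisymm
  · intro α hα
    obtain ⟨hsum, c, hc, hαc⟩ := mem_constructionA.1 hα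
    obtain ⟨β, hβ, hβc⟩ := mem_codeOf.1 hc
    obtain ⟨r, hr⟩ : α - β ∈ (castHom _ _).range :=
      mk_zero_mem_glue.1 (by simpa using sub_mem hαc hβc)
    have hrR : r ∈ blockSumZero (Fin t) (Fin p) ℤ :=
      castHom_mem_blockSumZero.1 (hr ▸ sub_mem hsum (mem_constructionA.1 (hM hβ)).1)
    simpa [hr] using add_mem hβ (hR ⟨r, hrR, hr⟩)
  · intro α hα
    obtain ⟨hsum, c, -, hαc⟩ := mem_constructionA.1 (hM hα)
    exact mem_constructionA.2 ⟨hsum, c, mem_codeOf.2 ⟨α, hα, hαc⟩, hαc⟩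

lemma sum_mul_self_eq_zero_of_mem_glue {α : Fin t → Fin p → ℚ} {c : Fin t → ZMod p}
    (hαc : (α, c) ∈ glue p t) (hsum : α ∈ blockSumZero (Fin t) (Fin p) ℚ)
    (hnorm : ∃ z : ℤ, blockDot α α = z) : ∑ b, c b * c b = 0 := by
  choose m hm using hαc
  dsimp only at hm
  obtain ⟨z, hz⟩ := hnorm
  have hp : (p : ℚ) ≠ 0 := Nat.cast_ne_zero.mpr (NeZero.ne p)
  have hrow (b : Fin t) : ∑ i, (m b i : ℚ) = (c b).val := by
    have := hsum b
    simp only [hm, Finset.sum_sub_distrib, Finset.sum_const, Finset.card_univ, Fintype.card_fin,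
      nsmul_eq_mul] at this
    field_simp at this
    linarith
  have hblock (b : Fin t) : α b ⬝ᵥ α b = ∑ i, (m b i : ℚ) ^ 2 - ((c b).val : ℚ) ^ 2 / p := by
    calc α b ⬝ᵥ α b
        = ∑ i, ((m b i : ℚ) ^ 2 - 2 * ((c b).val / p) * m b i + ((c b).val / p) ^ 2) :=
          Finset.sum_congr rfl fun i _ ↦ by rw [hm]; ring
      _ = ∑ i, (m b i : ℚ) ^ 2 - 2 * ((c b).val / p) * ∑ i, (m b i : ℚ)
            + p * ((c b).val / p) ^ 2 := by
          rw [Finset.sum_add_distrib, Finset.sum_sub_distrib, ← Finset.mul_sum]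
          simp
      _ = _ := by rw [hrow b]; field_simp; ring
  have hsq : ∑ b, ((c b).val : ℤ) ^ 2 = p * (∑ b, ∑ i, m b i ^ 2 - z) := by
    have : blockDot α α = ∑ b, (∑ i, (m b i : ℚ) ^ 2 - ((c b).val : ℚ) ^ 2 / p) :=
      Finset.sum_congr rfl fun b _ ↦ hblock b
    rw [hz, Finset.sum_sub_distrib, ← Finset.sum_div] at this
    qify
    field_simp at this ⊢
    linarith
  have := congrArg (Int.cast : ℤ → ZMod p) hsq
  push_cast [ZMod.natCast_val, ZMod.cast_id', ZMod.natCast_self] at this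
  simpa [sq] using this

lemma exists_val_of_sum_eq_zero {v : Fin p → ℚ} (hsum : ∑ i, v i = 0)
    (hdiff : ∀ i, ∃ m : ℤ, v i - v 0 = m) : ∃ c : ZMod p, ∀ i, ∃ m : ℤ, v i = m - c.val / p := by
  choose k hk using hdiff
  set K := ∑ i, k i
  have hp : (p : ℚ) ≠ 0 := Nat.cast_ne_zero.mpr (NeZero.ne p)
  have h0 : p * v 0 = -K := by
    have : ∑ i, v i = ∑ i, (v 0 + k i) := Finset.sum_congr rfl fun i _ ↦ by linarith [hk i]
    simp only [Finset.sum_add_distrib, Finset.sum_const, Finset.card_univ, Fintype.card_fin,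
      nsmul_eq_mul, hsum] at this
    push_cast [K]
    linarith
  have hval : (((K : ZMod p).val : ℤ) : ℚ) = K - p * (K / p : ℤ) := by
    rw [ZMod.val_intCast, Int.emod_def]
    push_cast
    ring
  refine ⟨K, fun i ↦ ⟨k i - K / p, ?_⟩⟩
  push_cast at hval ⊢
  rw [hval]
  field_simp
  linear_combination (p : ℚ) * hk i + h0

lemma mem_constructionA_top_of_forall_blockDot {α : Fin t → Fin p → ℚ}
    (hsum : α ∈ blockSumZero (Fin t) (Fin p) ℚ)
    (hint : ∀ r ∈ blockSumZero (Fin t) (Fin p) ℤ, ∃ z : ℤ, blockDot α (castHom _ _ r) = z) :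
    α ∈ constructionA ⊤ := by
  have hdiff (b : Fin t) (i : Fin p) : ∃ m : ℤ, α b i - α b 0 = m := by
    obtain ⟨z, hz⟩ := hint (Pi.single b (Pi.single i 1 - Pi.single 0 1)) fun s ↦ by
      by_cases hs : s = b <;> simp [hs, Finset.sum_sub_distrib]
    refine ⟨z, ?_⟩
    rw [← hz]
    simp [blockDot, dotProduct, Pi.single_apply, ite_apply, apply_ite (Int.cast : ℤ → ℚ), mul_sub,
      Finset.sum_sub_distrib]
  choose c hc using fun b ↦ exists_val_of_sum_eq_zero (hsum b) (hdiff b)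
  exact mem_constructionA.2 ⟨hsum, c, AddSubgroup.mem_top c, hc⟩

end ConstructionA

section Lattices

variable {m ι κ : Type*} [Fintype m] [Fintype ι] [Fintype κ]

lemma exists_int_dotProduct_of_even {L : Submodule ℤ (m → ℝ)}
    (heven : ∀ v ∈ L, ∃ k : ℤ, v ⬝ᵥ v = 2 * k) {v w : m → ℝ} (hv : v ∈ L) (hw : w ∈ L) :
    ∃ z : ℤ, v ⬝ᵥ w = z := by
  obtain ⟨k₁, h₁⟩ := heven v hv
  obtain ⟨k₂, h₂⟩ := heven w hw
  obtain ⟨k₃, h₃⟩ := heven (v + w) (add_mem hv hw)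
  refine ⟨k₃ - k₁ - k₂, ?_⟩
  rw [add_dotProduct, dotProduct_add, dotProduct_add, dotProduct_comm w v, h₁, h₂] at h₃
  push_cast
  linarith

lemma injective_of_dotProduct_eq_blockDot {L : Submodule ℤ (m → ℝ)} (g : L →+ (ι → κ → ℚ))
    (hg : ∀ a b : L, (a : m → ℝ) ⬝ᵥ b = ((blockDot (g a) (g b) : ℚ) : ℝ)) : Function.Injective g :=
  (injective_iff_map_eq_zero g).2 fun a ha ↦ by
    have := hg a a
    simp only [ha, blockDot, Pi.zero_apply, zero_dotProduct, Finset.sum_const_zero,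
      Rat.cast_zero, dotProduct_self_eq_zero] at this
    exact Subtype.ext this

lemma dotProduct_eq_blockDot_of_full {L S : Submodule ℤ (m → ℝ)} (hSL : S ≤ L)
    (hfull : ∀ v ∈ L, ∃ c : ℤ, c ≠ 0 ∧ c • v ∈ S) (g : L →+ (ι → κ → ℚ))
    (hS : ∀ a b : S, (a : m → ℝ) ⬝ᵥ b =
      ((blockDot (g (Submodule.inclusion hSL a)) (g (Submodule.inclusion hSL b)) : ℚ) : ℝ))
    (a b : L) : (a : m → ℝ) ⬝ᵥ b = ((blockDot (g a) (g b) : ℚ) : ℝ) := by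
  obtain ⟨c, hc, hca⟩ := hfull a a.2
  obtain ⟨d, hd, hdb⟩ := hfull b b.2
  have h := hS ⟨_, hca⟩ ⟨_, hdb⟩
  rw [show Submodule.inclusion hSL ⟨_, hca⟩ = c • a from rfl,
    show Submodule.inclusion hSL ⟨_, hdb⟩ = d • b from rfl, map_zsmul, map_zsmul,
    blockDot_smul_left, blockDot_smul_right] at h
  dsimp only at h
  rw [smul_dotProduct, dotProduct_smul] at h
  simp only [zsmul_eq_mul] at h
  push_cast at h
  have hcd : (c : ℝ) * d ≠ 0 := by exact_mod_cast mul_ne_zero hc hd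
  apply mul_left_cancel₀ hcd
  linear_combination h

end Lattices

section Equivalence

variable {n p t : ℕ} [NeZero p]

variable (p t) in
def EmbedsBetweenRootLatticeAndDual (L : Submodule ℤ (Fin n → ℝ)) : Prop :=
  ∃ g : L →+ (Fin t → Fin p → ℚ),
    (∀ a b : L, (a : Fin n → ℝ) ⬝ᵥ b = ((blockDot (g a) (g b) : ℚ) : ℝ)) ∧
    (blockSumZero (Fin t) (Fin p) ℤ).map (castHom _ _) ≤ g.range ∧ g.range ≤ constructionA ⊤

lemma embedsBetweenRootLatticeAndDual_of_addEquiv {L : Submodule ℤ (Fin n → ℝ)}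
    {C : AddSubgroup (Fin t → ZMod p)} (e : L ≃+ AddSubgroup.closure (LA p t C))
    (he : ∀ a b : L, (a : Fin n → ℝ) ⬝ᵥ b = ((blockDot (e a : Fin t → Fin p → ℚ) (e b) : ℚ) : ℝ)) :
    EmbedsBetweenRootLatticeAndDual p t L := by
  refine ⟨(AddSubgroup.closure _).subtype.comp e.toAddMonoidHom, he, fun α hα ↦ ?_, ?_⟩
  · exact ⟨e.symm ⟨α, (closure_LA C).ge (map_castHom_le_constructionA C hα)⟩, by simp⟩
  · rintro _ ⟨a, rfl⟩
    exact constructionA_mono le_top ((closure_LA C).le (e a).2)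

lemma EmbedsBetweenRootLatticeAndDual.exists_constructionA {L : Submodule ℤ (Fin n → ℝ)}
    (heven : ∀ v ∈ L, ∃ k : ℤ, v ⬝ᵥ v = 2 * k) (hL : EmbedsBetweenRootLatticeAndDual p t L) :
    ∃ C : AddSubgroup (Fin t → ZMod p), (∀ c ∈ C, ∑ b, c b * c b = 0) ∧
      ∃ e : L ≃+ AddSubgroup.closure (LA p t ↑C),
        ∀ a b : L, (a : Fin n → ℝ) ⬝ᵥ b = ((blockDot (e a : Fin t → Fin p → ℚ) (e b) : ℚ) : ℝ) := by
  obtain ⟨g, hg, hR, hM⟩ := hL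
  refine ⟨codeOf g.range, fun c hc ↦ ?_,
    (AddMonoidHom.ofInjective (injective_of_dotProduct_eq_blockDot g hg)).trans
      (AddEquiv.addSubgroupCongr (by rw [closure_LA, constructionA_codeOf hR hM])), hg⟩
  obtain ⟨_, ⟨a, rfl⟩, hac⟩ := mem_codeOf.1 hc
  obtain ⟨z, hz⟩ := exists_int_dotProduct_of_even heven a.2 a.2
  refine sum_mul_self_eq_zero_of_mem_glue hac (mem_constructionA.1 (hM ⟨a, rfl⟩)).1 ⟨z, ?_⟩
  exact_mod_cast (hg a a).symm.trans hz

lemma EmbedsBetweenRootLatticeAndDual.exists_rootLattice {L : Submodule ℤ (Fin n → ℝ)}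
    (hL : EmbedsBetweenRootLatticeAndDual p t L) :
    ∃ S : Submodule ℤ (Fin n → ℝ), S ≤ L ∧
      (∀ v ∈ L, ∃ c : ℤ, c ≠ 0 ∧ c • v ∈ S) ∧
      ∃ f : S ≃+ AddSubgroup.closure {a : Fin t → Fin p → ℤ | ∀ s, ∑ i, a s i = 0},
        ∀ a b : S, (a : Fin n → ℝ) ⬝ᵥ b = ((blockDot (f a : Fin t → Fin p → ℤ) (f b) : ℤ) : ℝ) := by
  obtain ⟨g, hg, hR, hM⟩ := hL
  set R := blockSumZero (Fin t) (Fin p) ℤ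
  set K := (R.map (castHom _ _)).comap g
  let eS : K.toIntSubmodule.map L.subtype ≃+ K :=
    (Submodule.equivMapOfInjective _ L.injective_subtype _).symm.toAddEquiv
  let eK : K ≃+ R.map (castHom _ _) :=
    (K.equivMapOfInjective g (injective_of_dotProduct_eq_blockDot g hg)).trans
      (AddEquiv.addSubgroupCongr (AddSubgroup.map_comap_eq_self hR))
  let eR : R ≃+ R.map (castHom _ _) := R.equivMapOfInjective _ castHom_injective
  let f := eS.trans <| eK.trans <| eR.symm.trans <|
    AddEquiv.addSubgroupCongr (closure_blockSumZero ℤ).symm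
  have hf (a : K.toIntSubmodule.map L.subtype) : castHom _ _ (f a) = g (eS a) :=
    congrArg Subtype.val (eR.apply_symm_apply (eK (eS a)))
  have heS (a : K.toIntSubmodule.map L.subtype) : ((eS a : L) : Fin n → ℝ) = a :=
    congrArg Subtype.val
      ((Submodule.equivMapOfInjective _ L.injective_subtype _).apply_symm_apply a)
  refine ⟨K.toIntSubmodule.map L.subtype, ?_, fun v hv ↦ ?_, f, fun a b ↦ ?_⟩
  · rintro _ ⟨x, -, rfl⟩
    exact x.2
  · refine ⟨p, by exact_mod_cast NeZero.ne p, (p : ℤ) • ⟨v, hv⟩, ?_, rfl⟩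
    show g ((p : ℤ) • ⟨v, hv⟩) ∈ R.map (castHom _ _)
    rw [map_zsmul]
    exact zsmul_mem_map_castHom (hM ⟨_, rfl⟩)
  · have := hg (eS a) (eS b)
    rw [heS, heS, ← hf, ← hf, blockDot_castHom] at this
    exact_mod_cast this

lemma embedsBetweenRootLatticeAndDual_of_full {L S : Submodule ℤ (Fin n → ℝ)}
    (heven : ∀ v ∈ L, ∃ k : ℤ, v ⬝ᵥ v = 2 * k) (hSL : S ≤ L)
    (hfull : ∀ v ∈ L, ∃ c : ℤ, c ≠ 0 ∧ c • v ∈ S)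
    (f : S ≃+ AddSubgroup.closure {a : Fin t → Fin p → ℤ | ∀ s, ∑ i, a s i = 0})
    (hf : ∀ a b : S, (a : Fin n → ℝ) ⬝ᵥ b = ((blockDot (f a : Fin t → Fin p → ℤ) (f b) : ℤ) : ℝ)) :
    EmbedsBetweenRootLatticeAndDual p t L := by
  obtain ⟨g, hgf⟩ := (Module.Baer.of_divisible _).extension_property_addMonoidHom
    (Submodule.inclusion hSL).toAddMonoidHom (Submodule.inclusion_injective hSL)
    ((castHom _ _).comp ((AddSubgroup.closure _).subtype.comp f.toAddMonoidHom))
  have hgS (s : S) : g (Submodule.inclusion hSL s) = castHom _ _ (f s) := DFunLike.congr_fun hgf s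
  have hg : ∀ a b : L, (a : Fin n → ℝ) ⬝ᵥ b = ((blockDot (g a) (g b) : ℚ) : ℝ) :=
    dotProduct_eq_blockDot_of_full hSL hfull g fun a b ↦ by
      rw [hgS, hgS, blockDot_castHom]
      exact_mod_cast hf a b
  refine ⟨g, hg, ?_, ?_⟩
  · rintro _ ⟨r, hr, rfl⟩
    exact ⟨_, (hgS (f.symm ⟨r, (closure_blockSumZero ℤ).ge hr⟩)).trans (by simp)⟩
  · rintro _ ⟨a, rfl⟩
    obtain ⟨c, hc, hca⟩ := hfull a a.2
    refine mem_constructionA_top_of_forall_blockDot ?_ fun r hr ↦ ?_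
    · refine mem_blockSumZero_of_zsmul_mem hc ?_
      rw [← map_zsmul, show c • a = Submodule.inclusion hSL ⟨_, hca⟩ from rfl, hgS]
      exact castHom_mem_blockSumZero.2 ((closure_blockSumZero ℤ).le (f _).2)
    · set s := f.symm ⟨r, (closure_blockSumZero ℤ).ge hr⟩
      obtain ⟨z, hz⟩ := exists_int_dotProduct_of_even heven a.2 (hSL s.2)
      refine ⟨z, ?_⟩
      have := hg a (Submodule.inclusion hSL s)
      rw [hgS, show ((f s : _) : Fin t → Fin p → ℤ) = r by simp [s]] at this
      exact_mod_cast this.symm.trans hz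

end Equivalence

theorem stmt_13_general (p t n : ℕ) (hp : p.Prime)
    (L : Submodule ℤ (Fin n → ℝ))
    (heven : ∀ v ∈ L, ∃ m : ℤ, ∑ i, v i * v i = 2 * m) :
    (∃ C : AddSubgroup (Fin t → ZMod p), (∀ c ∈ C, ∑ b, c b * c b = 0) ∧
      ∃ e : L ≃+ AddSubgroup.closure (LA p t ↑C),
        ∀ a b : L, ∑ i, (a : Fin n → ℝ) i * (b : Fin n → ℝ) i =
          ((∑ s, ∑ i, (e a : Fin t → Fin p → ℚ) s i * (e b : Fin t → Fin p → ℚ) s i : ℚ) : ℝ)) ↔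
    (∃ S : Submodule ℤ (Fin n → ℝ), S ≤ L ∧
      (∀ v ∈ L, ∃ c : ℤ, c ≠ 0 ∧ c • v ∈ S) ∧
      ∃ f : S ≃+ AddSubgroup.closure {a : Fin t → Fin p → ℤ | ∀ s, ∑ i, a s i = 0},
        ∀ a b : S, ∑ i, (a : Fin n → ℝ) i * (b : Fin n → ℝ) i =
          ((∑ s, ∑ i, (f a : Fin t → Fin p → ℤ) s i * (f b : Fin t → Fin p → ℤ) s i : ℤ) : ℝ)) := by
  have : NeZero p := ⟨hp.ne_zero⟩
  constructor
  · rintro ⟨C, -, e, he⟩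
    exact (embedsBetweenRootLatticeAndDual_of_addEquiv e he).exists_rootLattice
  · rintro ⟨S, hSL, hfull, f, hf⟩
    exact (embedsBetweenRootLatticeAndDual_of_full heven hSL hfull f hf).exists_constructionA heven

/-- An even lattice `L` is isometric to `L_A(C)` for some
self-orthogonal code `C` of length `t` over `ℤ/p` (`p` an odd prime) if and only
if `L` contains a full sublattice isometric to the orthogonal sum of `t` copies
of the root lattice of type `A_{p-1}` (the block-sum-zero vectors of `ℤ^{t×p}`).
"Isometric" means: an additive (i.e. `ℤ`-linear) equivalence preserving the
bilinear forms; "full" means every vector of `L` has a nonzero integral multiple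
in the sublattice. -/
theorem stmt_13 (p t n : ℕ) (hp : p.Prime) (hodd : Odd p)
    (L : Submodule ℤ (Fin n → ℝ))
    (heven : ∀ v ∈ L, ∃ m : ℤ, ∑ i, v i * v i = 2 * m) :
    (∃ C : AddSubgroup (Fin t → ZMod p), (∀ c ∈ C, ∑ b, c b * c b = 0) ∧
      ∃ e : L ≃+ AddSubgroup.closure (LA p t ↑C),
        ∀ a b : L, ∑ i, (a : Fin n → ℝ) i * (b : Fin n → ℝ) i =
          ((∑ s, ∑ i, (e a : Fin t → Fin p → ℚ) s i * (e b : Fin t → Fin p → ℚ) s i : ℚ) : ℝ)) ↔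
    (∃ S : Submodule ℤ (Fin n → ℝ), S ≤ L ∧
      (∀ v ∈ L, ∃ c : ℤ, c ≠ 0 ∧ c • v ∈ S) ∧
      ∃ f : S ≃+ AddSubgroup.closure {a : Fin t → Fin p → ℤ | ∀ s, ∑ i, a s i = 0},
        ∀ a b : S, ∑ i, (a : Fin n → ℝ) i * (b : Fin n → ℝ) i =
          ((∑ s, ∑ i, (f a : Fin t → Fin p → ℤ) s i * (f b : Fin t → Fin p → ℤ) s i : ℤ) : ℝ)) :=
  stmt_13_general p t n hp L heven
end

section
/- Let $L$ be a rootless positive-definite even lattice, $p$ an odd prime, $g$ a fixed-point free isometry of $L$ of order $p$, and $\lambda \in L^*$ with $g\lambda - \lambda \in L$ and $\lambda \notin L$. Let $\gamma \in (\lambda+L)$ have norm 2. Then the orbit $\{g^i\gamma \mid 0 \le i \le p-1\}$ consists of $p$ distinct norm-2 vectors summing to zero, with $(\gamma|g^i\gamma) \in \{0,-1\}$ for $1 \le i \le p-1$, and the $\mathbb{Z}$-span of this orbit is isometric to the root lattice of type $A_{p-1}$. -/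
/-- The root lattice of type `A_{p-1}`: integer vectors of length `p` with
coordinate sum zero. -/
def Ap (p : ℕ) : Submodule ℤ (Fin p → ℤ) where
  carrier := {a | ∑ i, a i = 0}
  add_mem' := by
    intro a b ha hb
    simp only [Set.mem_setOf_eq, Pi.add_apply] at *
    simp [Finset.sum_add_distrib, ha, hb]
  zero_mem' := by simp
  smul_mem' := by
    intro c a ha
    simp only [Set.mem_setOf_eq, Pi.smul_apply, smul_eq_mul] at *
    simp [← Finset.mul_sum, ha]

/-! Every `gⁱγ` lies in `γ + L`, so `(γ | gˢγ)` is an integer, and it lies in `[-2, 2]` since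
both vectors have norm 2. The values `±2` would give `gˢγ = ±γ`, hence `gγ = γ` (as `p` is an odd
prime) and then `pγ = Σ gⁱγ = 0`; the value `1` would make `γ - gˢγ` a root of `L`. As `Σ gⁱγ = 0`,
the values `(γ | gˢγ)` for `s ≠ 0` sum to `-2`, so exactly two of them, at `s = ±k`, equal `-1`.
Listed as `γ, gᵏγ, g²ᵏγ, …`, the orbit then has the Gram matrix of the cyclic family `eᵢ - eᵢ₊₁`
spanning `A_{p-1}`, and two families with the same positive-definite Gram matrix span isometric
lattices. -/

open Finset Submodule

theorem pow_eq_pow_of_natCast_eq {M : Type*} [Monoid M] {g : M} {p : ℕ} (hord : g ^ p = 1)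
    {a b : ℕ} (h : (a : ZMod p) = b) : g ^ a = g ^ b := by
  rw [pow_eq_pow_mod a hord, pow_eq_pow_mod b hord, (ZMod.natCast_eq_natCast_iff' a b p).mp h]

theorem exists_pow_pow_eq_self {M : Type*} [Monoid M] {g : M} {p s : ℕ} (hp : p.Prime)
    (hord : g ^ p = 1) (hs : ¬p ∣ s) : ∃ m : ℕ, (g ^ s) ^ m = g := by
  have := Fact.mk hp
  have hs0 : (s : ZMod p) ≠ 0 := by rwa [Ne, ZMod.natCast_eq_zero_iff]
  refine ⟨((s : ZMod p)⁻¹).val, ?_⟩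
  rw [← pow_mul, pow_eq_pow_of_natCast_eq hord (b := 1), pow_one]
  rw [Nat.cast_mul, ZMod.natCast_zmod_val, mul_inv_cancel₀ hs0, Nat.cast_one]

section Orbit

variable {R V : Type*} [Semiring R] [AddCommGroup V] [Module R V]

theorem pow_apply_mem {g : V ≃ₗ[R] V} {L : Submodule ℤ V} (hgL : ∀ x ∈ L, g x ∈ L) {x : V}
    (hx : x ∈ L) (s : ℕ) : (g ^ s) x ∈ L := by
  induction s with
  | zero => simpa
  | succ s ih => simpa only [pow_succ', LinearEquiv.mul_apply] using hgL _ ih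

theorem pow_apply_sub_self_mem {g : V ≃ₗ[R] V} {L : Submodule ℤ V} (hgL : ∀ x ∈ L, g x ∈ L)
    {x : V} (hx : g x - x ∈ L) (s : ℕ) : (g ^ s) x - x ∈ L := by
  induction s with
  | zero => simp
  | succ s ih =>
    have h : (g ^ (s + 1)) x - x = g ((g ^ s) x - x) + (g x - x) := by
      rw [pow_succ', LinearEquiv.mul_apply, map_sub]; abel
    exact h ▸ L.add_mem (hgL _ ih) hx

theorem sum_pow_apply_eq_zero {L : Submodule ℤ V} (hspan : span R (L : Set V) = ⊤)
    {g : V ≃ₗ[R] V} (hgL : ∀ x ∈ L, g x ∈ L) {p : ℕ} (hord : g ^ p = 1)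
    (hfpf : ∀ x ∈ L, g x = x → x = 0) (x : V) :
    ∑ i ∈ range p, (g ^ i) x = 0 := by
  let N : V →ₗ[R] V := ∑ i ∈ range p, ((g ^ i : V ≃ₗ[R] V) : V →ₗ[R] V)
  have hN : ∀ y, N y = ∑ i ∈ range p, (g ^ i) y := fun y => by simp [N]
  -- `g` permutes the terms of the orbit sum, because `g ^ p = g ^ 0`
  have hgN : ∀ y, g (N y) = N y := fun y => by
    have h := sum_range_succ (fun i => (g ^ i) y) p
    rw [sum_range_succ', hord, pow_zero] at h
    rw [hN, map_sum]
    simpa only [← LinearEquiv.mul_apply, ← pow_succ', LinearEquiv.coe_one, id, add_left_inj]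
      using h
  have hker : LinearMap.ker N = ⊤ := by
    refine eq_top_iff.mpr (hspan ▸ span_le.mpr fun y hy => ?_)
    exact hfpf _ (hN y ▸ sum_mem fun i _ => pow_apply_mem hgL hy i) (hgN y)
  rw [← hN, ← LinearMap.mem_ker, hker]
  exact mem_top

theorem pow_apply_ne_self [NoZeroSMulDivisors ℕ V] {g : V ≃ₗ[R] V} {p s : ℕ} (hp : p.Prime)
    (hord : g ^ p = 1) {x : V} (hx : x ≠ 0) (hsum : ∑ i ∈ range p, (g ^ i) x = 0)
    (hs : ¬p ∣ s) : (g ^ s) x ≠ x := by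
  intro hfix
  obtain ⟨m, hm⟩ := exists_pow_pow_eq_self hp hord hs
  have hgx : g x = x := by
    rw [← hm, LinearEquiv.coe_pow]
    exact Function.IsFixedPt.iterate hfix m
  have hall : ∀ i, (g ^ i) x = x := fun i => by
    rw [LinearEquiv.coe_pow]
    exact Function.iterate_fixed hgx i
  rw [sum_congr rfl fun i _ => hall i, sum_const, card_range] at hsum
  exact hx ((smul_eq_zero.mp hsum).resolve_left hp.ne_zero)

theorem pow_apply_inj_of_lt [NoZeroSMulDivisors ℕ V] {g : V ≃ₗ[R] V} {p : ℕ} (hp : p.Prime)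
    (hord : g ^ p = 1) {x : V} (hx : x ≠ 0) (hsum : ∑ i ∈ range p, (g ^ i) x = 0) :
    ∀ i < p, ∀ j < p, (g ^ i) x = (g ^ j) x → i = j := by
  suffices h : ∀ i j, i < j → j < p → (g ^ i) x ≠ (g ^ j) x by
    intro i hi j hj hij
    by_contra hne
    rcases Nat.lt_or_gt_of_ne hne with hlt | hlt
    · exact h i j hlt hj hij
    · exact h j i hlt hi hij.symm
  intro i j hij hj heq
  have hfix : (g ^ (j - i)) x = x := by
    apply (g ^ i).injective
    rw [← LinearEquiv.mul_apply, ← pow_add, Nat.add_sub_cancel' hij.le, heq]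
  exact pow_apply_ne_self hp hord hx hsum (Nat.not_dvd_of_pos_of_lt (by omega) (by omega)) hfix

end Orbit

section DotProduct

variable {ι : Type*} [Fintype ι]

theorem exists_int_dotProduct_of_even_s15 {L : Submodule ℤ (ι → ℝ)}
    (heven : ∀ v ∈ L, ∃ m : ℤ, v ⬝ᵥ v = 2 * m) {x y : ι → ℝ} (hx : x ∈ L) (hy : y ∈ L) :
    ∃ m : ℤ, x ⬝ᵥ y = m := by
  obtain ⟨a, ha⟩ := heven x hx
  obtain ⟨b, hb⟩ := heven y hy
  obtain ⟨c, hc⟩ := heven (x + y) (L.add_mem hx hy)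
  refine ⟨c - a - b, ?_⟩
  simp only [add_dotProduct, dotProduct_add, dotProduct_comm y x] at hc
  push_cast
  linarith

theorem dotProduct_eq_zero_or_neg_one {u v : ι → ℝ} (hu : u ⬝ᵥ u = 2) (hv : v ⬝ᵥ v = 2)
    {m : ℤ} (hm : u ⬝ᵥ v = m) (hne : v ≠ u) (hne' : v ≠ -u)
    (hroot : (v - u) ⬝ᵥ (v - u) ≠ 2) : u ⬝ᵥ v = 0 ∨ u ⬝ᵥ v = -1 := by
  have hsub : (v - u) ⬝ᵥ (v - u) = 4 - 2 * m := by
    simp only [sub_dotProduct, dotProduct_sub, dotProduct_comm v u, hu, hv, hm]; ring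
  have hadd : (v + u) ⬝ᵥ (v + u) = 4 + 2 * m := by
    simp only [add_dotProduct, dotProduct_add, dotProduct_comm v u, hu, hv, hm]; ring
  have hpos : ∀ w : ι → ℝ, w ≠ 0 → 0 < w ⬝ᵥ w := fun w hw =>
    lt_of_le_of_ne (sum_nonneg fun i _ => mul_self_nonneg (w i))
      (Ne.symm (dotProduct_self_eq_zero.not.mpr hw))
  have hlt : (m : ℝ) < 2 := by linarith [hpos _ (sub_ne_zero.mpr hne)]
  have hgt : (-2 : ℝ) < m := by linarith [hpos _ (fun h => hne' (eq_neg_of_add_eq_zero_left h))]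
  have hne1 : (m : ℝ) ≠ 1 := fun h => hroot (by rw [hsub, h]; norm_num)
  rw [hm]
  have : m = 0 ∨ m = -1 := by
    have : m ≠ 1 := by exact_mod_cast hne1
    have : m < 2 := by exact_mod_cast hlt
    have : -2 < m := by exact_mod_cast hgt
    omega
  rcases this with rfl | rfl <;> simp

variable {g : (ι → ℝ) ≃ₗ[ℝ] (ι → ℝ)}

theorem dotProduct_pow_apply_pow_apply (hiso : ∀ x y, g x ⬝ᵥ g y = x ⬝ᵥ y) (a : ℕ)
    (x y : ι → ℝ) : (g ^ a) x ⬝ᵥ (g ^ a) y = x ⬝ᵥ y := by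
  induction a with
  | zero => rfl
  | succ a ih => rw [pow_succ', LinearEquiv.mul_apply, LinearEquiv.mul_apply, hiso, ih]

theorem dotProduct_pow_apply_pow_apply_eq_sub {p : ℕ} [NeZero p]
    (hiso : ∀ x y, g x ⬝ᵥ g y = x ⬝ᵥ y) (hord : g ^ p = 1) (x : ι → ℝ) (a b : ℕ) :
    (g ^ a) x ⬝ᵥ (g ^ b) x = x ⬝ᵥ (g ^ ((b : ZMod p) - a).val) x := by
  have hb : g ^ b = g ^ a * g ^ ((b : ZMod p) - a).val := by
    rw [← pow_add]
    exact pow_eq_pow_of_natCast_eq hord (by simp)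
  rw [hb, LinearEquiv.mul_apply, dotProduct_pow_apply_pow_apply hiso]

end DotProduct

theorem dotProduct_pow_apply_eq_zero_or_neg_one {ι : Type*} [Fintype ι] {p : ℕ} (hp : p.Prime)
    (hp2 : p ≠ 2) {L : Submodule ℤ (ι → ℝ)} (heven : ∀ v ∈ L, ∃ m : ℤ, v ⬝ᵥ v = 2 * m)
    (hrootless : ∀ v ∈ L, v ⬝ᵥ v ≠ 2) {g : (ι → ℝ) ≃ₗ[ℝ] (ι → ℝ)}
    (hiso : ∀ x y, g x ⬝ᵥ g y = x ⬝ᵥ y) (hgL : ∀ x ∈ L, g x ∈ L) (hord : g ^ p = 1)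
    {lam : ι → ℝ} (hdual : ∀ β ∈ L, ∃ m : ℤ, lam ⬝ᵥ β = m) (hglam : g lam - lam ∈ L)
    {γ : ι → ℝ} (hγ : γ - lam ∈ L) (hγ2 : γ ⬝ᵥ γ = 2) (hsum : ∑ i ∈ range p, (g ^ i) γ = 0)
    {s : ℕ} (hs : ¬p ∣ s) : γ ⬝ᵥ (g ^ s) γ = 0 ∨ γ ⬝ᵥ (g ^ s) γ = -1 := by
  have hγ0 : γ ≠ 0 := by rintro rfl; simp at hγ2
  have hgγ : g γ - γ ∈ L := by
    have h : g γ - γ = g (γ - lam) - (γ - lam) + (g lam - lam) := by rw [map_sub]; abel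
    exact h ▸ L.add_mem (L.sub_mem (hgL _ hγ) hγ) hglam
  have hδ := pow_apply_sub_self_mem hgL hgγ s
  obtain ⟨m₁, hm₁⟩ := hdual _ hδ
  obtain ⟨m₂, hm₂⟩ := exists_int_dotProduct_of_even_s15 heven hγ hδ
  have hint : γ ⬝ᵥ (g ^ s) γ = ((2 + m₁ + m₂ : ℤ) : ℝ) := by
    have h : γ ⬝ᵥ (g ^ s) γ =
        γ ⬝ᵥ γ + lam ⬝ᵥ ((g ^ s) γ - γ) + (γ - lam) ⬝ᵥ ((g ^ s) γ - γ) := by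
      simp only [sub_dotProduct, dotProduct_sub]; ring
    rw [h, hγ2, hm₁, hm₂]; push_cast; ring
  have hneg : (g ^ s) γ ≠ -γ := fun h => by
    refine pow_apply_ne_self hp hord hγ0 hsum (s := 2 * s) ?_ ?_
    · rw [hp.dvd_mul, Nat.prime_dvd_prime_iff_eq hp Nat.prime_two]
      exact fun h' => h'.elim hp2 hs
    · rw [two_mul, pow_add, LinearEquiv.mul_apply, h, map_neg, h, neg_neg]
  exact dotProduct_eq_zero_or_neg_one hγ2 ((dotProduct_pow_apply_pow_apply hiso s γ γ).trans hγ2)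
    hint (pow_apply_ne_self hp hord hγ0 hsum hs) hneg (hrootless _ hδ)

/-- The Gram matrix entry `(αᵢ | αⱼ)` of the cyclic family `αᵢ = eᵢ - eᵢ₊₁`, as a function of
`d = j - i`. -/
def cycleGram {A : Type*} [AddGroupWithOne A] [DecidableEq A] (d : A) : ℤ :=
  (if d = 0 then 2 else 0) - (if d = 1 then 1 else 0) - (if d = -1 then 1 else 0)

theorem cycleGram_map {A B : Type*} [Ring A] [Ring B] [DecidableEq A] [DecidableEq B]
    (φ : A ≃+* B) (d : A) : cycleGram (φ d) = cycleGram d := by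
  simp only [cycleGram, ← map_one φ, ← map_neg, ← map_zero φ, φ.injective.eq_iff]

theorem exists_mul_eq_cycleGram {R : Type*} [CommRing R] [CharZero R] {p : ℕ} [Fact p.Prime]
    (hp2 : p ≠ 2) {f : ZMod p → R} (h0 : f 0 = 2) (hval : ∀ x ≠ 0, f x = 0 ∨ f x = -1)
    (hneg : ∀ x, f (-x) = f x) (hsum : ∑ x, f x = 0) :
    ∃ k ≠ 0, ∀ x, f (x * k) = cycleGram x := by
  classical
  set S := univ.filter (f · = -1)
  have hf : ∀ x, f x = (if x = 0 then 2 else 0) - (if x ∈ S then 1 else 0) := by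
    intro x
    by_cases hx : x = 0
    · subst hx
      have : (2 : R) ≠ -1 := by norm_num
      simp [S, h0, this]
    · rcases hval x hx with h | h <;> simp [S, hx, h]
  have hS : S.card = 2 := by
    simp_rw [hf, sum_sub_distrib, sum_ite_eq', sum_boole, mem_univ, if_true,
      filter_mem_eq_inter, univ_inter] at hsum
    exact_mod_cast (sub_eq_zero.mp hsum).symm
  obtain ⟨k, hk⟩ := card_pos.mp (by omega : 0 < S.card)
  have hfk : f k = -1 := (mem_filter.mp hk).2
  have hk0 : k ≠ 0 := by rintro rfl; rw [h0] at hfk; norm_num at hfk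
  have h2 : (2 : ZMod p) ≠ 0 := Ring.two_ne_zero (by rwa [ZMod.ringChar_zmod_n])
  have hkk : k ≠ -k := fun h => hk0 (by
    have : (2 : ZMod p) * k = 0 := by linear_combination h
    exact (mul_eq_zero.mp this).resolve_left h2)
  have hS' : S = {k, -k} := by
    refine (eq_of_subset_of_card_le ?_ (by rw [hS, card_pair hkk])).symm
    exact insert_subset hk (singleton_subset_iff.mpr (mem_filter.mpr ⟨mem_univ _, hneg k ▸ hfk⟩))
  have h1 : (1 : ZMod p) ≠ -1 := fun h => h2 (by linear_combination h)
  refine ⟨k, hk0, fun x => ?_⟩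
  simp only [hf, hS', mem_insert, mem_singleton, mul_eq_right₀ hk0, ← neg_one_mul k,
    mul_left_inj' hk0, mul_eq_zero, or_iff_left hk0, cycleGram]
  by_cases hx1 : x = 1
  · subst hx1; simp [h1]
  · by_cases hxm : x = -1 <;> simp [hx1, hxm, h1.symm]

theorem ZMod.sum_val_eq_sum_range {M : Type*} [AddCommMonoid M] {p : ℕ} [NeZero p]
    (F : ℕ → M) : ∑ x : ZMod p, F x.val = ∑ i ∈ range p, F i :=
  sum_nbij ZMod.val (fun x _ => mem_range.mpr (ZMod.val_lt x))
    (ZMod.val_injective p).injOn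
    (fun i hi => ⟨i, mem_coe.mpr (mem_univ _), ZMod.val_cast_of_lt (mem_range.mp hi)⟩)
    (fun _ _ => rfl)

theorem exists_dotProduct_orbit_eq_cycleGram {ι : Type*} [Fintype ι] {p : ℕ} [Fact p.Prime]
    (hp2 : p ≠ 2) {g : (ι → ℝ) ≃ₗ[ℝ] (ι → ℝ)} (hiso : ∀ x y, g x ⬝ᵥ g y = x ⬝ᵥ y)
    (hord : g ^ p = 1) {γ : ι → ℝ} (hγ2 : γ ⬝ᵥ γ = 2) (hsum : ∑ i ∈ range p, (g ^ i) γ = 0)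
    (hval : ∀ s, ¬p ∣ s → γ ⬝ᵥ (g ^ s) γ = 0 ∨ γ ⬝ᵥ (g ^ s) γ = -1) :
    ∃ k : ZMod p, k ≠ 0 ∧
      ∀ x y : ZMod p, (g ^ (x * k).val) γ ⬝ᵥ (g ^ (y * k).val) γ = cycleGram (y - x) := by
  have hshift := dotProduct_pow_apply_pow_apply_eq_sub hiso hord γ
  obtain ⟨k, hk0, hk⟩ := exists_mul_eq_cycleGram hp2 (f := fun x => γ ⬝ᵥ (g ^ x.val) γ)
    (by simpa using hγ2)
    (fun x hx => hval _ (by rwa [← ZMod.natCast_eq_zero_iff, ZMod.natCast_zmod_val]))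
    (fun x => by simpa [dotProduct_comm] using (hshift x.val 0).symm)
    (by rw [← dotProduct_sum, ZMod.sum_val_eq_sum_range (fun i => (g ^ i) γ), hsum,
      dotProduct_zero])
  refine ⟨k, hk0, fun x y => ?_⟩
  rw [hshift, ZMod.natCast_zmod_val, ZMod.natCast_zmod_val, ← sub_mul]
  exact hk (y - x)

section CycleRoot

variable {A : Type*} [AddCommGroupWithOne A] [DecidableEq A]

def cycleRoot (i : A) : A → ℤ := Pi.single i 1 - Pi.single (i + 1) 1

theorem cycleRoot_dotProduct_cycleRoot [Fintype A] (i j : A) :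
    cycleRoot i ⬝ᵥ cycleRoot j = cycleGram (j - i) := by
  obtain ⟨d, rfl⟩ : ∃ d, j = i + d := ⟨j - i, by abel⟩
  simp only [cycleRoot, sub_dotProduct, single_dotProduct, one_mul, Pi.sub_apply,
    Pi.single_apply, cycleGram, add_sub_cancel_left, add_right_inj, left_eq_add, add_assoc,
    add_eq_zero_iff_eq_neg, eq_comm (a := (1 : A)), add_eq_right]
  split_ifs <;> norm_num

end CycleRoot

open Fin.CommRing in
theorem span_range_cycleRoot {p : ℕ} [NeZero p] :
    span ℤ (Set.range (cycleRoot (A := Fin p))) = Ap p := by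
  set S := span ℤ (Set.range (cycleRoot (A := Fin p)))
  apply le_antisymm
  · refine span_le.mpr ?_
    rintro _ ⟨i, rfl⟩
    show ∑ s, cycleRoot i s = 0
    simp [cycleRoot, sum_sub_distrib]
  · have hmem : ∀ m : ℕ, (Pi.single (m : Fin p) 1 - Pi.single 0 1 : Fin p → ℤ) ∈ S := by
      intro m
      induction m with
      | zero => simp
      | succ m ih =>
        have h : (Pi.single ((m : Fin p) + 1) 1 - Pi.single 0 1 : Fin p → ℤ) =
            (Pi.single (m : Fin p) 1 - Pi.single 0 1) - cycleRoot (m : Fin p) := by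
          rw [cycleRoot]; abel
        rw [Nat.cast_succ, h]
        exact sub_mem ih (subset_span ⟨_, rfl⟩)
    intro u hu
    have hu' : u = ∑ i, u i • (Pi.single i 1 - Pi.single 0 1 : Fin p → ℤ) := by
      simp only [smul_sub, sum_sub_distrib, ← sum_smul]
      rw [show ∑ i, u i = 0 from hu, zero_smul, sub_zero]
      ext s
      simp [Pi.single_apply]
    rw [hu']
    exact sum_mem fun i _ => smul_mem _ _ (Fin.cast_val_eq_self i ▸ hmem i)

theorem exists_linearEquiv_span_dotProduct_eq {ι κ κ' : Type*} [Fintype ι] [Fintype κ]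
    [Fintype κ'] (v : ι → κ → ℝ) (u : ι → κ' → ℤ)
    (h : ∀ i j, v i ⬝ᵥ v j = ((u i ⬝ᵥ u j : ℤ) : ℝ)) :
    ∃ e : span ℤ (Set.range v) ≃ₗ[ℤ] span ℤ (Set.range u),
      ∀ a b : span ℤ (Set.range v), (a : κ → ℝ) ⬝ᵥ b = (((e a : κ' → ℤ) ⬝ᵥ e b : ℤ) : ℝ) := by
  set Φ := Fintype.linearCombination ℤ v
  set Ψ := Fintype.linearCombination ℤ u
  have hΦΨ : ∀ a b, Φ a ⬝ᵥ Φ b = ((Ψ a ⬝ᵥ Ψ b : ℤ) : ℝ) := fun a b => by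
    simp only [Φ, Ψ, Fintype.linearCombination_apply, sum_dotProduct, dotProduct_sum,
      smul_dotProduct, dotProduct_smul, h]
    push_cast [zsmul_eq_mul, smul_eq_mul]
    rfl
  have hker : LinearMap.ker Φ = LinearMap.ker Ψ := by
    ext a
    rw [LinearMap.mem_ker, LinearMap.mem_ker, ← dotProduct_self_eq_zero, hΦΨ, Int.cast_eq_zero,
      dotProduct_self_eq_zero]
  let e₀ : LinearMap.range Φ ≃ₗ[ℤ] LinearMap.range Ψ :=
    Φ.quotKerEquivRange.symm ≪≫ₗ quotEquivOfEq _ _ hker ≪≫ₗ Ψ.quotKerEquivRange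
  have he₀ : ∀ a, (e₀ ⟨Φ a, a, rfl⟩ : κ' → ℤ) = Ψ a := fun a => by
    have h₁ : Φ.quotKerEquivRange.symm ⟨Φ a, a, rfl⟩ = Submodule.Quotient.mk a := by
      rw [LinearEquiv.symm_apply_eq]; rfl
    simp only [e₀, LinearEquiv.trans_apply, h₁, quotEquivOfEq_mk,
      LinearMap.quotKerEquivRange_apply_mk]
  have hΦ := Fintype.range_linearCombination ℤ v
  have hΨ := Fintype.range_linearCombination ℤ u
  refine ⟨LinearEquiv.ofEq _ _ hΦ.symm ≪≫ₗ e₀ ≪≫ₗ LinearEquiv.ofEq _ _ hΨ, ?_⟩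
  rintro ⟨_, ha⟩ ⟨_, hb⟩
  rw [← hΦ] at ha hb
  obtain ⟨a, rfl⟩ := ha
  obtain ⟨b, rfl⟩ := hb
  change Φ a ⬝ᵥ Φ b = (((e₀ ⟨Φ a, a, rfl⟩ : κ' → ℤ) ⬝ᵥ e₀ ⟨Φ b, b, rfl⟩ : ℤ) : ℝ)
  rw [he₀, he₀, hΦΨ]

theorem setOf_exists_pow_apply_eq_range {R V : Type*} [Semiring R] [AddCommMonoid V]
    [Module R V] {g : V ≃ₗ[R] V} {p : ℕ} [Fact p.Prime] (hord : g ^ p = 1) {k : ZMod p}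
    (hk : k ≠ 0) (x : V) :
    {v | ∃ i : ℕ, v = (g ^ i) x} = Set.range fun y : ZMod p => (g ^ (y * k).val) x := by
  ext v
  constructor
  · rintro ⟨i, rfl⟩
    refine ⟨i * k⁻¹, ?_⟩
    change (g ^ (i * k⁻¹ * k).val) x = _
    rw [pow_eq_pow_of_natCast_eq hord (b := i) (by simp [hk])]
  · rintro ⟨y, rfl⟩
    exact ⟨_, rfl⟩

open Fin.CommRing in
theorem exists_linearEquiv_span_orbit_Ap {ι : Type*} [Fintype ι] {p : ℕ} [Fact p.Prime]
    {g : (ι → ℝ) ≃ₗ[ℝ] (ι → ℝ)} (hord : g ^ p = 1) {γ : ι → ℝ} {k : ZMod p} (hk : k ≠ 0)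
    (hgram : ∀ x y : ZMod p, (g ^ (x * k).val) γ ⬝ᵥ (g ^ (y * k).val) γ = cycleGram (y - x)) :
    ∃ e : span ℤ {v | ∃ i : ℕ, v = (g ^ i) γ} ≃ₗ[ℤ] Ap p,
      ∀ a b : span ℤ {v | ∃ i : ℕ, v = (g ^ i) γ},
        (a : ι → ℝ) ⬝ᵥ b = (((e a : Fin p → ℤ) ⬝ᵥ e b : ℤ) : ℝ) := by
  set φ := ZMod.finEquiv p
  have hrange : {v | ∃ i : ℕ, v = (g ^ i) γ} = Set.range fun i => (g ^ (φ i * k).val) γ := by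
    rw [setOf_exists_pow_apply_eq_range hord hk]
    exact (φ.surjective.range_comp _).symm
  obtain ⟨e, he⟩ := exists_linearEquiv_span_dotProduct_eq (fun i => (g ^ (φ i * k).val) γ)
    cycleRoot fun i j => by
      rw [hgram, ← map_sub, cycleGram_map, cycleRoot_dotProduct_cycleRoot]
  rw [hrange]
  exact ⟨e ≪≫ₗ LinearEquiv.ofEq _ _ span_range_cycleRoot, he⟩

theorem stmt_15_general {n p : ℕ} (hp : p.Prime) (hodd : Odd p)
    (L : Submodule ℤ (Fin n → ℝ))
    (hspan : Submodule.span ℝ (L : Set (Fin n → ℝ)) = ⊤)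
    (heven : ∀ v ∈ L, ∃ m : ℤ, ∑ i, v i * v i = 2 * m)
    (hrootless : ∀ v ∈ L, ∑ i, v i * v i ≠ 2)
    (g : (Fin n → ℝ) ≃ₗ[ℝ] (Fin n → ℝ))
    (hiso : ∀ x y : Fin n → ℝ, ∑ i, g x i * g y i = ∑ i, x i * y i)
    (hgL : ∀ x ∈ L, g x ∈ L)
    (hord : g ^ p = 1)
    (hfpf : ∀ x ∈ L, g x = x → x = 0)
    (lam : Fin n → ℝ)
    (hdual : ∀ β ∈ L, ∃ m : ℤ, ∑ i, lam i * β i = m)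
    (hglam : g lam - lam ∈ L)
    (γ : Fin n → ℝ) (hγ : γ - lam ∈ L) (hγ2 : ∑ i, γ i * γ i = 2) :
    (∀ i < p, ∀ j < p, (g ^ i) γ = (g ^ j) γ → i = j) ∧
    (∑ i ∈ Finset.range p, (g ^ i) γ = 0) ∧
    (∀ i : ℕ, 1 ≤ i → i ≤ p - 1 →
      (∑ s, γ s * ((g ^ i) γ) s = 0 ∨ ∑ s, γ s * ((g ^ i) γ) s = -1)) ∧
    (∀ i : ℕ, ∑ s, ((g ^ i) γ) s * ((g ^ i) γ) s = 2) ∧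
    ∃ e : Submodule.span ℤ {v : Fin n → ℝ | ∃ i : ℕ, v = (g ^ i) γ} ≃ₗ[ℤ] Ap p,
      ∀ a b : Submodule.span ℤ {v : Fin n → ℝ | ∃ i : ℕ, v = (g ^ i) γ},
        ∑ s, (a : Fin n → ℝ) s * (b : Fin n → ℝ) s =
          ((∑ s, (e a : Fin p → ℤ) s * (e b : Fin p → ℤ) s : ℤ) : ℝ) := by
  have := Fact.mk hp
  have hp2 : p ≠ 2 := by rintro rfl; exact absurd hodd (by decide)
  have hγ0 : γ ≠ 0 := by rintro rfl; simp at hγ2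
  have hsum := sum_pow_apply_eq_zero hspan hgL hord hfpf γ
  have hval (s : ℕ) (hs : ¬p ∣ s) : γ ⬝ᵥ (g ^ s) γ = 0 ∨ γ ⬝ᵥ (g ^ s) γ = -1 :=
    dotProduct_pow_apply_eq_zero_or_neg_one hp hp2 heven hrootless hiso hgL hord hdual hglam hγ
      hγ2 hsum hs
  obtain ⟨k, hk, hgram⟩ := exists_dotProduct_orbit_eq_cycleGram hp2 hiso hord hγ2 hsum hval
  exact ⟨pow_apply_inj_of_lt hp hord hγ0 hsum, hsum,
    fun i hi hi' => hval i (Nat.not_dvd_of_pos_of_lt hi (by have := hp.pos; omega)),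
    fun i => (dotProduct_pow_apply_pow_apply hiso i γ γ).trans hγ2,
    exists_linearEquiv_span_orbit_Ap hord hk hgram⟩

/-- Let `L ⊂ ℝ^n` be a rootless positive-definite even (full)
lattice, `p` an odd prime, `g` a fixed-point free isometry of `L` of order `p`,
and `λ ∈ L*` with `gλ - λ ∈ L` and `λ ∉ L`.  If `γ ∈ λ + L` has norm `2`, then
the orbit `{gⁱγ | 0 ≤ i ≤ p-1}` consists of `p` distinct norm-2 vectors summing
to zero, with `(γ | gⁱγ) ∈ {0, -1}` for `1 ≤ i ≤ p-1`, and the `ℤ`-span of the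
orbit is isometric to the root lattice of type `A_{p-1}`. -/
theorem stmt_15 {n p : ℕ} (hp : p.Prime) (hodd : Odd p)
    (L : Submodule ℤ (Fin n → ℝ))
    (hspan : Submodule.span ℝ (L : Set (Fin n → ℝ)) = ⊤)
    (heven : ∀ v ∈ L, ∃ m : ℤ, ∑ i, v i * v i = 2 * m)
    (hrootless : ∀ v ∈ L, ∑ i, v i * v i ≠ 2)
    (g : (Fin n → ℝ) ≃ₗ[ℝ] (Fin n → ℝ))
    (hiso : ∀ x y : Fin n → ℝ, ∑ i, g x i * g y i = ∑ i, x i * y i)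
    (hgL : ∀ x ∈ L, g x ∈ L)
    (hord : g ^ p = 1)
    (hfpf : ∀ x ∈ L, g x = x → x = 0)
    (lam : Fin n → ℝ)
    (hdual : ∀ β ∈ L, ∃ m : ℤ, ∑ i, lam i * β i = m)
    (hlamL : lam ∉ L)
    (hglam : g lam - lam ∈ L)
    (γ : Fin n → ℝ) (hγ : γ - lam ∈ L) (hγ2 : ∑ i, γ i * γ i = 2) :
    (∀ i < p, ∀ j < p, (g ^ i) γ = (g ^ j) γ → i = j) ∧
    (∑ i ∈ Finset.range p, (g ^ i) γ = 0) ∧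
    (∀ i : ℕ, 1 ≤ i → i ≤ p - 1 →
      (∑ s, γ s * ((g ^ i) γ) s = 0 ∨ ∑ s, γ s * ((g ^ i) γ) s = -1)) ∧
    (∀ i : ℕ, ∑ s, ((g ^ i) γ) s * ((g ^ i) γ) s = 2) ∧
    ∃ e : Submodule.span ℤ {v : Fin n → ℝ | ∃ i : ℕ, v = (g ^ i) γ} ≃ₗ[ℤ] Ap p,
      ∀ a b : Submodule.span ℤ {v : Fin n → ℝ | ∃ i : ℕ, v = (g ^ i) γ},
        ∑ s, (a : Fin n → ℝ) s * (b : Fin n → ℝ) s =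
          ((∑ s, (e a : Fin p → ℤ) s * (e b : Fin p → ℤ) s : ℤ) : ℝ) :=
  stmt_15_general hp hodd L hspan heven hrootless g hiso hgL hord hfpf lam hdual hglam γ hγ hγ2
end
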